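/- Let U ⊆ ℂ be open and connected and let G : U → ℂ⁴ be holomorphic with componentwise real and imaginary parts g, h : U → ℝ⁴. Assume that ⟨⟨G(z),G(z)⟩⟩ = 0, ⟨⟨G'(z),G'(z)⟩⟩ = 0 and G'(z) ≠ 0 for all z ∈ U. Then there exists an ℝ-linear isometry J : ℝ⁴ → ℝ⁴ with J∘J = −id such that h(z) = J(g(z)) for all z ∈ U and J(Dg(z)(v)) = Dg(z)(−i·v) for all z ∈ U and v ∈ ℂ (i.e. g is a holomorphic curve with respect to the orthogonal complex structure J on ℝ⁴ and h = J∘g). -/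

import Mathlib

open scoped BigOperators

/-- The ℂ-bilinear form `⟨⟨Z,W⟩⟩ = ∑ j, Z j * W j` on `ℂ⁴` (no conjugation). -/
noncomputable def bilin {m : ℕ} (Z W : Fin m → ℂ) : ℂ := ∑ j, Z j * W j

/-- Componentwise real part of a map into `ℂ^m`, viewed in Euclidean space `ℝ^m`. -/
noncomputable def rePart {m : ℕ} (F : ℂ → Fin m → ℂ) (z : ℂ) :
    EuclideanSpace ℝ (Fin m) := WithLp.toLp 2 (fun j => (F z j).re)

/-- Componentwise imaginary part of a map into `ℂ^m`, viewed in Euclidean space `ℝ^m`. -/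
noncomputable def imPart {m : ℕ} (F : ℂ → Fin m → ℂ) (z : ℂ) :
    EuclideanSpace ℝ (Fin m) := WithLp.toLp 2 (fun j => (F z j).im)

/-!
Identify `ℂ⁴` with the complexified quaternions `Z₀ + Z₁ i + Z₂ j + Z₃ k`, i.e. with complex
`2 × 2` matrices; then `⟨⟨Z, Z⟩⟩` is the determinant. So `G` is a holomorphic curve
of singular matrices with singular derivative, and comparing Wronskians of its entries (identity
theorem) shows that all `G z` share a fixed left or a fixed right kernel vector. Read in `ℍ`, this
says `Im G = u · Re G` or `Im G = Re G · u` for a fixed quaternion `u` with `u² = -1`, and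
multiplication by `u` is the complex structure `J`. The condition `Im Z = J (Re Z)` cuts out a
complex subspace of `ℂ⁴`, so it passes from `G` to `G'`, which gives the statement about `Dg`.
-/

open Filter Metric Topology Matrix Quaternion
open Complex (I)

local notation "ℝ⁴" => EuclideanSpace ℝ (Fin 4)

section Wronskian

variable {𝕜 : Type*} [RCLike 𝕜] {U : Set 𝕜}

theorem AnalyticOnNhd.mul_eq_mul_of_wronskian_eq_zero {f g : 𝕜 → 𝕜}
    (hf : AnalyticOnNhd 𝕜 f U) (hg : AnalyticOnNhd 𝕜 g U) (hU : IsOpen U)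
    (hU' : IsPreconnected U) (hW : ∀ z ∈ U, f z * deriv g z = g z * deriv f z)
    {z₀ : 𝕜} (hz₀ : z₀ ∈ U) (hf₀ : f z₀ ≠ 0) :
    ∀ z ∈ U, f z₀ * g z = g z₀ * f z := by
  obtain ⟨ε, hε, hball⟩ : ∃ ε > 0, ball z₀ ε ⊆ U ∩ {z | f z ≠ 0} :=
    mem_nhds_iff.mp <| inter_mem (hU.mem_nhds hz₀) <|
      (hf z₀ hz₀).continuousAt.eventually_ne hf₀
  -- `(g / f)' = W(f, g) / f²` vanishes on the ball
  have hquot : ∀ z ∈ ball z₀ ε, g z / f z = g z₀ / f z₀ := by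
    refine fun z hz => isOpen_ball.is_const_of_deriv_eq_zero (f := fun z => g z / f z)
      (convex_ball z₀ ε).isPreconnected (fun w hw => ?_) (fun w hw => ?_) hz (mem_ball_self hε)
    · obtain ⟨hwU, hfw⟩ := hball hw
      exact ((hg w hwU).differentiableAt.div (hf w hwU).differentiableAt hfw).differentiableWithinAt
    · obtain ⟨hwU, hfw⟩ := hball hw
      rw [deriv_fun_div (hg w hwU).differentiableAt (hf w hwU).differentiableAt hfw,
        mul_comm (deriv g w), hW w hwU, sub_self, zero_div, Pi.zero_apply]
  have hloc : (fun z => f z₀ * g z) =ᶠ[𝓝 z₀] (fun z => g z₀ * f z) := by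
    filter_upwards [ball_mem_nhds z₀ hε] with z hz
    have hfz : f z ≠ 0 := (hball hz).2
    have := hquot z hz
    field_simp at this
    linear_combination this
  exact fun z hz => (analyticOnNhd_const.mul hg).eqOn_of_preconnected_of_eventuallyEq
    (analyticOnNhd_const.mul hf) hU' hz₀ hloc hz

variable {a b c d : 𝕜 → 𝕜}

theorem exists_kernel_vector_of_wronskian_eq_zero (ha : AnalyticOnNhd 𝕜 a U)
    (hb : AnalyticOnNhd 𝕜 b U) (hc : AnalyticOnNhd 𝕜 c U) (hd : AnalyticOnNhd 𝕜 d U)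
    (hU : IsOpen U) (hU' : IsPreconnected U) (hdet : ∀ z ∈ U, a z * d z = b z * c z)
    (hW : ∀ z ∈ U, a z * deriv c z = c z * deriv a z) :
    (∃ p q : 𝕜, (p, q) ≠ 0 ∧ ∀ z ∈ U, p * a z + q * c z = 0 ∧ p * b z + q * d z = 0) ∨
    (∃ p q : 𝕜, (p, q) ≠ 0 ∧ ∀ z ∈ U, p * a z + q * b z = 0 ∧ p * c z + q * d z = 0) := by
  by_cases hcol : ∀ z ∈ U, a z = 0 ∧ c z = 0
  · exact Or.inr ⟨1, 0, by simp, fun z hz => by simp [hcol z hz]⟩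
  push Not at hcol
  obtain ⟨z₀, hz₀, hcol₀⟩ := hcol
  have hprop : ∀ z ∈ U, c z₀ * a z = a z₀ * c z := by
    by_cases ha₀ : a z₀ = 0
    · exact hc.mul_eq_mul_of_wronskian_eq_zero ha hU hU' (fun z hz => (hW z hz).symm) hz₀
        (hcol₀ ha₀)
    · exact fun z hz => (ha.mul_eq_mul_of_wronskian_eq_zero hc hU hU' hW hz₀ ha₀ z hz).symm
  -- `c z₀ * b - a z₀ * d` is killed by both `a` and `c`, which do not both vanish on `U`
  have hsecond : ∀ z ∈ U, c z₀ * b z - a z₀ * d z = 0 := by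
    have hφ : AnalyticOnNhd 𝕜 (fun z => c z₀ * b z - a z₀ * d z) U :=
      (analyticOnNhd_const.mul hb).sub (analyticOnNhd_const.mul hd)
    have hφa : ∀ z ∈ U, a z * (c z₀ * b z - a z₀ * d z) = 0 := fun z hz => by
      linear_combination b z * hprop z hz - a z₀ * hdet z hz
    have hφc : ∀ z ∈ U, c z * (c z₀ * b z - a z₀ * d z) = 0 := fun z hz => by
      linear_combination d z * hprop z hz - c z₀ * hdet z hz
    rcases ha.eq_zero_or_eq_zero_of_mul_eq_zero hφ hφa hU' with ha0 | h
    · rcases hc.eq_zero_or_eq_zero_of_mul_eq_zero hφ hφc hU' with hc0 | h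
      · exact absurd (hc0 z₀ hz₀) (hcol₀ (ha0 z₀ hz₀))
      · exact h
    · exact h
  refine Or.inl ⟨c z₀, -a z₀, fun h => ?_, fun z hz => ⟨?_, ?_⟩⟩
  · simp only [Prod.mk_eq_zero, neg_eq_zero] at h
    exact hcol₀ h.2 h.1
  · linear_combination hprop z hz
  · linear_combination hsecond z hz

theorem exists_kernel_vector_of_det_eq_zero (ha : AnalyticOnNhd 𝕜 a U)
    (hb : AnalyticOnNhd 𝕜 b U) (hc : AnalyticOnNhd 𝕜 c U) (hd : AnalyticOnNhd 𝕜 d U)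
    (hU : IsOpen U) (hU' : IsPreconnected U) (hdet : ∀ z ∈ U, a z * d z = b z * c z)
    (hdet' : ∀ z ∈ U, deriv a z * deriv d z = deriv b z * deriv c z) :
    (∃ p q : 𝕜, (p, q) ≠ 0 ∧ ∀ z ∈ U, p * a z + q * c z = 0 ∧ p * b z + q * d z = 0) ∨
    (∃ p q : 𝕜, (p, q) ≠ 0 ∧ ∀ z ∈ U, p * a z + q * b z = 0 ∧ p * c z + q * d z = 0) := by
  have hdiff : ∀ z ∈ U,
      deriv a z * d z + a z * deriv d z = deriv b z * c z + b z * deriv c z := by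
    intro z hz
    have hloc : (fun w => a w * d w) =ᶠ[𝓝 z] (fun w => b w * c w) :=
      eventually_of_mem (hU.mem_nhds hz) hdet
    have := hloc.deriv_eq
    rwa [deriv_fun_mul (ha z hz).differentiableAt (hd z hz).differentiableAt,
      deriv_fun_mul (hb z hz).differentiableAt (hc z hz).differentiableAt] at this
  -- the Wronskians of the first column and of the first row multiply to zero
  have hprod : ∀ z ∈ U,
      (a z * deriv c z - c z * deriv a z) * (a z * deriv b z - b z * deriv a z) = 0 := by
    intro z hz
    linear_combination a z * deriv a z * hdiff z hz - deriv a z ^ 2 * hdet z hz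
      - a z ^ 2 * hdet' z hz
  have hWc : AnalyticOnNhd 𝕜 (fun z => a z * deriv c z - c z * deriv a z) U :=
    (ha.mul hc.deriv).sub (hc.mul ha.deriv)
  have hWb : AnalyticOnNhd 𝕜 (fun z => a z * deriv b z - b z * deriv a z) U :=
    (ha.mul hb.deriv).sub (hb.mul ha.deriv)
  rcases hWc.eq_zero_or_eq_zero_of_mul_eq_zero hWb hprod hU' with hW | hW
  · exact exists_kernel_vector_of_wronskian_eq_zero ha hb hc hd hU hU' hdet
      fun z hz => sub_eq_zero.mp (hW z hz)
  · exact (exists_kernel_vector_of_wronskian_eq_zero ha hc hb hd hU hU'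
      (fun z hz => (hdet z hz).trans (mul_comm _ _)) fun z hz => sub_eq_zero.mp (hW z hz)).symm

end Wronskian

section ComplexGraph

variable {m : ℕ}

variable (m) in
noncomputable def componentRe : (Fin m → ℂ) →L[ℝ] EuclideanSpace ℝ (Fin m) :=
  (EuclideanSpace.equiv (Fin m) ℝ).symm.toContinuousLinearMap.comp
    (ContinuousLinearMap.pi fun j => Complex.reCLM.comp (ContinuousLinearMap.proj j))

variable (m) in
noncomputable def componentIm : (Fin m → ℂ) →L[ℝ] EuclideanSpace ℝ (Fin m) :=
  (EuclideanSpace.equiv (Fin m) ℝ).symm.toContinuousLinearMap.comp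
    (ContinuousLinearMap.pi fun j => Complex.imCLM.comp (ContinuousLinearMap.proj j))

@[simp] lemma componentRe_apply (Z : Fin m → ℂ) (j : Fin m) :
    componentRe m Z j = (Z j).re := rfl

@[simp] lemma componentIm_apply (Z : Fin m → ℂ) (j : Fin m) :
    componentIm m Z j = (Z j).im := rfl

lemma componentRe_smul (c : ℂ) (Z : Fin m → ℂ) :
    componentRe m (c • Z) = c.re • componentRe m Z - c.im • componentIm m Z := by
  ext j; simp [Complex.mul_re]

lemma componentIm_smul (c : ℂ) (Z : Fin m → ℂ) :
    componentIm m (c • Z) = c.re • componentIm m Z + c.im • componentRe m Z := by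
  ext j; simp [Complex.mul_im]

def complexGraph (J : EuclideanSpace ℝ (Fin m) →ₗ[ℝ] EuclideanSpace ℝ (Fin m))
    (hJ : ∀ x, J (J x) = -x) : Submodule ℂ (Fin m → ℂ) where
  carrier := {Z | componentIm m Z = J (componentRe m Z)}
  add_mem' hZ hW := by simp_all
  zero_mem' := by simp
  smul_mem' c Z hZ := by
    simp only [Set.mem_ofPred_eq, componentRe_smul, componentIm_smul, map_sub, map_smul] at hZ ⊢
    rw [hZ, hJ, smul_neg, sub_neg_eq_add, add_comm]

lemma fderiv_rePart {G : ℂ → Fin m → ℂ} {z : ℂ} (hG : DifferentiableAt ℂ G z) (v : ℂ) :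
    fderiv ℝ (rePart G) z v = componentRe m (v • deriv G z) := by
  change fderiv ℝ (componentRe m ∘ G) z v = _
  rw [((componentRe m).hasFDerivAt.comp z
    (hG.hasDerivAt.hasFDerivAt.restrictScalars ℝ)).fderiv]
  simp

theorem apply_fderiv_rePart_of_imPart_eq {U : Set ℂ} (hU : IsOpen U) {G : ℂ → Fin m → ℂ}
    (hG : ∀ z ∈ U, DifferentiableAt ℂ G z)
    (J : EuclideanSpace ℝ (Fin m) →ₗ[ℝ] EuclideanSpace ℝ (Fin m)) (hJJ : ∀ x, J (J x) = -x)
    (hJ : ∀ z ∈ U, imPart G z = J (rePart G z)) {z : ℂ} (hz : z ∈ U) (v : ℂ) :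
    J (fderiv ℝ (rePart G) z v) = fderiv ℝ (rePart G) z (-(I * v)) := by
  set S := complexGraph J hJJ
  have hspan : (Submodule.span ℂ (G '' U) : Set (Fin m → ℂ)) ⊆ S :=
    Submodule.span_le.mpr <| by rintro _ ⟨w, hw, rfl⟩; exact hJ w hw
  have hderiv : deriv G z ∈ S := by
    have := range_derivWithin_subset_closure_span_image G (s := U) (t := U)
      (by simpa using subset_closure) ⟨z, rfl⟩
    rw [derivWithin_of_isOpen hU hz] at this
    exact S.closed_of_finiteDimensional.closure_subset_iff.mpr hspan this
  have hv : componentIm m (v • deriv G z) = J (componentRe m (v • deriv G z)) :=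
    S.smul_mem v hderiv
  rw [fderiv_rePart (hG z hz), fderiv_rePart (hG z hz), ← hv]
  ext j; simp [Complex.mul_re, Complex.mul_im]

end ComplexGraph

section Quaternion

-- `Z₀ + Z₁ i + Z₂ j + Z₃ k` under the representation `i ↦ !![I, 0; 0, -I]`, `j ↦ !![0, 1; -1, 0]`
def quatMatrix : (Fin 4 → ℂ) →ₗ[ℂ] Matrix (Fin 2) (Fin 2) ℂ where
  toFun Z := !![Z 0 + I * Z 1, Z 2 + I * Z 3; -Z 2 + I * Z 3, Z 0 - I * Z 1]
  map_add' Z W := by ext i j; fin_cases i <;> fin_cases j <;> simp <;> ring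
  map_smul' c Z := by ext i j; fin_cases i <;> fin_cases j <;> simp <;> ring

lemma quatMatrix_apply (Z : Fin 4 → ℂ) :
    quatMatrix Z = !![Z 0 + I * Z 1, Z 2 + I * Z 3; -Z 2 + I * Z 3, Z 0 - I * Z 1] := rfl

lemma det_quatMatrix (Z : Fin 4 → ℂ) : (quatMatrix Z).det = bilin Z Z := by
  rw [quatMatrix_apply, det_fin_two_of, bilin, Fin.sum_univ_four]
  linear_combination -(Z 1 * Z 1 + Z 3 * Z 3) * Complex.I_sq

-- the quaternion `p + q j`
def quatOfPair (p q : ℂ) : ℍ := ⟨p.re, p.im, q.re, q.im⟩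

lemma quatOfPair_eq_zero_iff {p q : ℂ} : quatOfPair p q = 0 ↔ p = 0 ∧ q = 0 := by
  rw [Quaternion.ext_iff]
  simp [quatOfPair, Complex.ext_iff, and_assoc]

lemma coeComplex_I_mul_self : ((I : ℂ) : ℍ) * (I : ℂ) = -1 := by
  rw [← coeComplex_mul, Complex.I_mul_I]
  ext <;> simp

lemma conjugate_mul_self_eq_neg_one {D : Type*} [DivisionRing D] {c u : D} (hc : c ≠ 0)
    (hu : u * u = -1) : c⁻¹ * u * c * (c⁻¹ * u * c) = -1 := by
  rw [show c⁻¹ * u * c * (c⁻¹ * u * c) = c⁻¹ * (u * (c * c⁻¹) * u) * c by noncomm_ring,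
    mul_inv_cancel₀ hc, mul_one, hu, mul_neg_one, neg_mul, inv_mul_cancel₀ hc]

lemma mem_unitary_of_mul_self_eq_neg_one {u : ℍ} (hu : u * u = -1) : u ∈ unitary ℍ := by
  have hunit : IsUnit u := isUnit_iff_ne_zero.mpr <| by rintro rfl; simp at hu
  rw [hunit.mem_unitary_iff_star_mul_self, star_mul_self, normSq_eq_norm_mul_self, ← norm_mul,
    hu, norm_neg, norm_one, coe_one]

lemma exists_complexStructure_of_linearIsometryEquiv {L : ℍ ≃ₗᵢ[ℝ] ℍ}
    (hL : ∀ x, L (L x) = -x) :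
    ∃ J : ℝ⁴ →ₗᵢ[ℝ] ℝ⁴, (∀ x, J (J x) = -x) ∧
      ∀ x, J x = linearIsometryEquivTuple (L (linearIsometryEquivTuple.symm x)) :=
  ⟨(linearIsometryEquivTuple.symm.trans (L.trans linearIsometryEquivTuple)).toLinearIsometry,
    fun x => by
      change linearIsometryEquivTuple (L (linearIsometryEquivTuple.symm
        (linearIsometryEquivTuple (L (linearIsometryEquivTuple.symm x))))) = -x
      rw [LinearIsometryEquiv.symm_apply_apply, hL, map_neg, LinearIsometryEquiv.apply_symm_apply],
    fun _ => rfl⟩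

lemma quatOfPair_mul_im_eq_of_vecMul_eq_zero {v : Fin 2 → ℂ} {Z : Fin 4 → ℂ}
    (h : v ᵥ* quatMatrix Z = 0) :
    quatOfPair (v 0) (v 1) * linearIsometryEquivTuple.symm (componentIm 4 Z) =
      (I : ℂ) * (quatOfPair (v 0) (v 1) * linearIsometryEquivTuple.symm (componentRe 4 Z)) := by
  have h₀ := congrFun h 0
  have h₁ := congrFun h 1
  simp only [quatMatrix_apply, vecMul, dotProduct, Fin.sum_univ_two, of_apply, cons_val',
    cons_val_zero, cons_val_one, cons_val_fin_one, Pi.zero_apply, Complex.ext_iff, Complex.add_re,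
    Complex.add_im,
    Complex.sub_re, Complex.sub_im, Complex.mul_re, Complex.mul_im, Complex.neg_re, Complex.neg_im,
    Complex.I_re, Complex.I_im, Complex.zero_re, Complex.zero_im] at h₀ h₁
  obtain ⟨h₀r, h₀i⟩ := h₀
  obtain ⟨h₁r, h₁i⟩ := h₁
  ext <;> simp only [re_mul, imI_mul, imJ_mul, imK_mul] <;>
    simp only [quatOfPair, linearIsometryEquivTuple_symm_apply, componentRe_apply,
      componentIm_apply, re_coeComplex, imI_coeComplex, imJ_coeComplex, imK_coeComplex,
      Complex.I_re, Complex.I_im] <;>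
    linarith

lemma re_mul_quatOfPair_mul_eq_of_mulVec_eq_zero {v : Fin 2 → ℂ} {Z : Fin 4 → ℂ}
    (h : quatMatrix Z *ᵥ v = 0) :
    linearIsometryEquivTuple.symm (componentRe 4 Z) * quatOfPair (v 0) (-star (v 1)) * (I : ℂ) =
      linearIsometryEquivTuple.symm (componentIm 4 Z) * quatOfPair (v 0) (-star (v 1)) := by
  have h₀ := congrFun h 0
  have h₁ := congrFun h 1
  simp only [quatMatrix_apply, mulVec, dotProduct, Fin.sum_univ_two, of_apply, cons_val',
    cons_val_zero, cons_val_one, cons_val_fin_one, Pi.zero_apply, Complex.ext_iff, Complex.add_re,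
    Complex.add_im,
    Complex.sub_re, Complex.sub_im, Complex.mul_re, Complex.mul_im, Complex.neg_re, Complex.neg_im,
    Complex.I_re, Complex.I_im, Complex.zero_re, Complex.zero_im] at h₀ h₁
  obtain ⟨h₀r, h₀i⟩ := h₀
  obtain ⟨h₁r, h₁i⟩ := h₁
  ext <;> simp only [re_mul, imI_mul, imJ_mul, imK_mul] <;>
    simp only [quatOfPair, linearIsometryEquivTuple_symm_apply, componentRe_apply,
      componentIm_apply, re_coeComplex, imI_coeComplex, imJ_coeComplex, imK_coeComplex,
      Complex.I_re, Complex.I_im, RCLike.star_def, Complex.neg_re, Complex.neg_im,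
      Complex.conj_re, Complex.conj_im] <;>
    linarith

theorem exists_complexStructure_of_vecMul_eq_zero {v : Fin 2 → ℂ} (hv : v ≠ 0) :
    ∃ J : ℝ⁴ →ₗᵢ[ℝ] ℝ⁴, (∀ x, J (J x) = -x) ∧
      ∀ Z, v ᵥ* quatMatrix Z = 0 → componentIm 4 Z = J (componentRe 4 Z) := by
  set c := quatOfPair (v 0) (v 1)
  have hc : c ≠ 0 := fun h => hv <| by
    rw [quatOfPair_eq_zero_iff] at h
    ext i; fin_cases i <;> simp [h.1, h.2]
  have hu := conjugate_mul_self_eq_neg_one hc coeComplex_I_mul_self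
  obtain ⟨J, hJJ, hJ⟩ := exists_complexStructure_of_linearIsometryEquiv
    (L := Unitary.mulLeft ℝ ℍ ⟨_, mem_unitary_of_mul_self_eq_neg_one hu⟩)
    fun x => show c⁻¹ * I * c * (c⁻¹ * I * c * x) = -x by rw [← mul_assoc, hu, neg_one_mul]
  refine ⟨J, hJJ, fun Z hZ => ?_⟩
  rw [hJ]
  change _ = linearIsometryEquivTuple
    (c⁻¹ * I * c * linearIsometryEquivTuple.symm (componentRe 4 Z))
  rw [mul_assoc, mul_assoc, ← quatOfPair_mul_im_eq_of_vecMul_eq_zero hZ, ← mul_assoc,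
    inv_mul_cancel₀ hc, one_mul, LinearIsometryEquiv.apply_symm_apply]

theorem exists_complexStructure_of_mulVec_eq_zero {v : Fin 2 → ℂ} (hv : v ≠ 0) :
    ∃ J : ℝ⁴ →ₗᵢ[ℝ] ℝ⁴, (∀ x, J (J x) = -x) ∧
      ∀ Z, quatMatrix Z *ᵥ v = 0 → componentIm 4 Z = J (componentRe 4 Z) := by
  set c := quatOfPair (v 0) (-star (v 1))
  have hc : c ≠ 0 := fun h => hv <| by
    rw [quatOfPair_eq_zero_iff, neg_eq_zero, star_eq_zero] at h
    ext i; fin_cases i <;> simp [h.1, h.2]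
  have hu := conjugate_mul_self_eq_neg_one (inv_ne_zero hc) coeComplex_I_mul_self
  rw [inv_inv] at hu
  obtain ⟨J, hJJ, hJ⟩ := exists_complexStructure_of_linearIsometryEquiv
    (L := Unitary.mulRight ℝ (⟨_, mem_unitary_of_mul_self_eq_neg_one hu⟩ : unitary ℍ))
    fun x => show x * (c * I * c⁻¹) * (c * I * c⁻¹) = -x by rw [mul_assoc, hu, mul_neg_one]
  refine ⟨J, hJJ, fun Z hZ => ?_⟩
  rw [hJ]
  change _ = linearIsometryEquivTuple
    (linearIsometryEquivTuple.symm (componentRe 4 Z) * (c * I * c⁻¹))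
  rw [← mul_assoc, ← mul_assoc, re_mul_quatOfPair_mul_eq_of_mulVec_eq_zero hZ, mul_assoc,
    mul_inv_cancel₀ hc, mul_one, LinearIsometryEquiv.apply_symm_apply]

end Quaternion

theorem exists_kernel_vector_quatMatrix {U : Set ℂ} (hU : IsOpen U) (hU' : IsPreconnected U)
    {G : ℂ → Fin 4 → ℂ} (hG : ∀ z ∈ U, DifferentiableAt ℂ G z)
    (hQ0 : ∀ z ∈ U, bilin (G z) (G z) = 0)
    (hiso : ∀ z ∈ U, bilin (deriv G z) (deriv G z) = 0) :
    ∃ v : Fin 2 → ℂ, v ≠ 0 ∧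
      ((∀ z ∈ U, v ᵥ* quatMatrix (G z) = 0) ∨ ∀ z ∈ U, quatMatrix (G z) *ᵥ v = 0) := by
  have hGa : AnalyticOnNhd ℂ G U :=
    DifferentiableOn.analyticOnNhd (fun z hz => (hG z hz).differentiableWithinAt) hU
  have hentry : ∀ i j, AnalyticOnNhd ℂ (fun z => quatMatrix (G z) i j) U ∧
      ∀ z ∈ U, deriv (fun w => quatMatrix (G w) i j) z = quatMatrix (deriv G z) i j := by
    intro i j
    let ℓ : (Fin 4 → ℂ) →L[ℂ] ℂ :=
      LinearMap.toContinuousLinearMap ((entryLinearMap ℂ ℂ i j).comp quatMatrix)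
    exact ⟨fun z hz => (ℓ.analyticAt _).comp (hGa z hz),
      fun z hz => (ℓ.hasFDerivAt.comp_hasDerivAt z (hG z hz).hasDerivAt).deriv⟩
  have hdet : ∀ Z, quatMatrix Z 0 0 * quatMatrix Z 1 1 - quatMatrix Z 0 1 * quatMatrix Z 1 0 =
      bilin Z Z := fun Z => by rw [← det_quatMatrix, det_fin_two]
  rcases exists_kernel_vector_of_det_eq_zero (hentry 0 0).1 (hentry 0 1).1 (hentry 1 0).1
    (hentry 1 1).1 hU hU' (fun z hz => sub_eq_zero.mp ((hdet (G z)).trans (hQ0 z hz)))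
    (fun z hz => by
      rw [(hentry 0 0).2 z hz, (hentry 0 1).2 z hz, (hentry 1 0).2 z hz, (hentry 1 1).2 z hz]
      exact sub_eq_zero.mp ((hdet _).trans (hiso z hz))) with ⟨p, q, hpq, h⟩ | ⟨p, q, hpq, h⟩
  · refine ⟨![p, q], by simpa using hpq, Or.inl fun z hz => ?_⟩
    ext j; fin_cases j <;> simp [vecMul, dotProduct, h z hz]
  · refine ⟨![p, q], by simpa using hpq, Or.inr fun z hz => ?_⟩
    ext j; fin_cases j <;> simp [mulVec, dotProduct, mul_comm, h z hz]

theorem holomorphic_representative_in_Q0 (U : Set ℂ) (hU : IsOpen U)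
    (hconn : IsConnected U) (G : ℂ → Fin 4 → ℂ)
    (hG : ∀ z ∈ U, DifferentiableAt ℂ G z)
    (hQ0 : ∀ z ∈ U, bilin (G z) (G z) = 0)
    (hiso : ∀ z ∈ U, bilin (deriv G z) (deriv G z) = 0) :
    ∃ J : EuclideanSpace ℝ (Fin 4) →ₗᵢ[ℝ] EuclideanSpace ℝ (Fin 4),
      (∀ x, J (J x) = -x) ∧
      (∀ z ∈ U, imPart G z = J (rePart G z)) ∧
      (∀ z ∈ U, ∀ v : ℂ,
        J (fderiv ℝ (rePart G) z v) = fderiv ℝ (rePart G) z (-(Complex.I * v))) := by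
  obtain ⟨v, hv, hker⟩ := exists_kernel_vector_quatMatrix hU hconn.isPreconnected hG hQ0 hiso
  obtain ⟨J, hJJ, hJ⟩ : ∃ J : EuclideanSpace ℝ (Fin 4) →ₗᵢ[ℝ] EuclideanSpace ℝ (Fin 4),
      (∀ x, J (J x) = -x) ∧ ∀ z ∈ U, imPart G z = J (rePart G z) := by
    rcases hker with h | h
    · obtain ⟨J, hJJ, hJ⟩ := exists_complexStructure_of_vecMul_eq_zero hv
      exact ⟨J, hJJ, fun z hz => hJ _ (h z hz)⟩
    · obtain ⟨J, hJJ, hJ⟩ := exists_complexStructure_of_mulVec_eq_zero hv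
      exact ⟨J, hJJ, fun z hz => hJ _ (h z hz)⟩
  exact ⟨J, hJJ, hJ, fun z hz =>
    apply_fderiv_rePart_of_imPart_eq hU hG J.toLinearMap hJJ hJ hz⟩
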